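/- arXiv:1909.08843 — 3 statements merged into one kernel-verified Lean document; each statement's English description precedes it below -/
import Mathlib

section
/- Let f be an L-Lipschitz function on a pointed metric space M with f(0) = 0, and for r > 0 define f_r(x) = max(min(f(x), L·Λ_r(x)), −L·Λ_r(x)), where Λ_r is the truncation function Λ_r(x) = max(0, min(d(x,0), 2r − d(x,0))). Then f_r is L-Lipschitz, f_r(0) = 0, f_r has bounded support, f_r(x) = f(x) for all x with d(x,0) ≤ r, and f_r(x) = 0 whenever f(x) = 0. -/
open Metric Set

/-- Let `f` be an `L`-Lipschitz function on a pointed metric space `M` with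
`f(0) = 0`, and for `r > 0` let `f_r(x) = max(min(f(x), L·Λ_r(x)), −L·Λ_r(x))`, where
`Λ_r(x) = max(0, min(d(x,0), 2r − d(x,0)))`. Then `f_r` is `L`-Lipschitz, `f_r(0) = 0`,
`f_r` has bounded support, `f_r = f` on `B(0,r)`, and `f_r(x) = 0` whenever `f(x) = 0`. -/
theorem truncated_function_properties {M : Type*} [MetricSpace M] (z : M)
    (f : M → ℝ) (L : ℝ) (hL : 0 ≤ L)
    (hf : ∀ x y, |f x - f y| ≤ L * dist x y) (hfz : f z = 0)
    (r : ℝ) (hr : 0 < r)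
    (Λ : M → ℝ) (hΛ : ∀ x, Λ x = max 0 (min (dist x z) (2 * r - dist x z)))
    (fr : M → ℝ) (hfr : ∀ x, fr x = max (min (f x) (L * Λ x)) (-(L * Λ x))) :
    (∀ x y, |fr x - fr y| ≤ L * dist x y) ∧ fr z = 0 ∧
      Bornology.IsBounded {x | fr x ≠ 0} ∧
      (∀ x, dist x z ≤ r → fr x = f x) ∧
      (∀ x, f x = 0 → fr x = 0) := by
  have hΛnn : ∀ x, 0 ≤ Λ x := fun x => by rw [hΛ]; exact le_max_left _ _
  have hΛlip : ∀ x y, |Λ x - Λ y| ≤ dist x y := by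
    intro x y
    rw [hΛ, hΛ]
    refine (abs_max_sub_max_le_max _ _ _ _).trans ?_
    have h1 : |dist x z - dist y z| ≤ dist x y := abs_dist_sub_le x y z
    have h2 : |(2 * r - dist x z) - (2 * r - dist y z)| ≤ dist x y := by
      have : (2 * r - dist x z) - (2 * r - dist y z) = -(dist x z - dist y z) := by ring
      rw [this, abs_neg]; exact h1
    refine max_le (by simpa using dist_nonneg) ?_
    exact (abs_min_sub_min_le_max _ _ _ _).trans (max_le h1 h2)
  have hLΛlip : ∀ x y, |L * Λ x - L * Λ y| ≤ L * dist x y := by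
    intro x y
    rw [← mul_sub, abs_mul, abs_of_nonneg hL]
    exact mul_le_mul_of_nonneg_left (hΛlip x y) hL
  refine ⟨?_, ?_, ?_, ?_, ?_⟩
  · intro x y
    rw [hfr, hfr]
    refine (abs_max_sub_max_le_max _ _ _ _).trans (max_le ?_ ?_)
    · exact (abs_min_sub_min_le_max _ _ _ _).trans (max_le (hf x y) (hLΛlip x y))
    · rw [neg_sub_neg, abs_sub_comm]; exact hLΛlip x y
  · have : Λ z = 0 := by rw [hΛ]; simp
    rw [hfr, this, hfz]; simp
  · refine (Metric.isBounded_closedBall (x := z) (r := 2 * r)).subset ?_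
    intro x hx
    simp only [mem_setOf_eq] at hx
    by_contra h
    simp only [mem_closedBall, not_le] at h
    have hΛ0 : Λ x = 0 := by
      rw [hΛ]
      have : 2 * r - dist x z ≤ 0 := by linarith
      rw [max_eq_left]
      exact le_trans (min_le_right _ _) this
    apply hx
    rw [hfr, hΛ0]
    simp [max_eq_right (min_le_right (f x) 0)]
  · intro x hx
    have hΛx : Λ x = dist x z := by
      rw [hΛ]
      rw [max_eq_right]
      · exact min_eq_left (by linarith)
      · exact le_min dist_nonneg (by linarith)
    have hfb : |f x| ≤ L * Λ x := by
      rw [hΛx]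
      simpa [hfz] using hf x z
    rw [hfr]
    rw [min_eq_left (le_of_abs_le hfb), max_eq_left (neg_le_of_abs_le hfb)]
  · intro x hx
    have : 0 ≤ L * Λ x := mul_nonneg hL (hΛnn x)
    rw [hfr, hx]
    simp [min_eq_left this, max_eq_left (neg_nonpos_of_nonneg this)]
end

section
/- Let M be a pointed metric space, h a Lipschitz function on M with bounded support S = supp(h), and K ⊂ M a set containing the base point and S. For f ∈ Lip₀(K), define T_h(f)(x) = f(x)h(x) for x ∈ K and T_h(f)(x) = 0 for x ∉ K. Then T_h(f) is a well-defined Lipschitz function on M vanishing at 0, with Lipschitz constant at most (‖h‖_∞ + rad(S)·‖h‖_Lip)·‖f‖_Lip, where rad(S) = sup{d(x,0) : x ∈ S}. -/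
open Metric Set Classical

/-- Let `h` be a Lipschitz function on `M` with bounded support
`S = supp(h)`, and let `K ⊆ M` contain the base point and `S`. For a Lipschitz function `f`
on `K` vanishing at the base point, the weighted function `T_h(f)`, equal to `f·h` on `K` and
`0` outside `K`, is a Lipschitz function on `M` vanishing at the base point, with Lipschitz
constant at most `(‖h‖_∞ + rad(S)·‖h‖_Lip)·‖f‖_Lip`. -/
theorem weighting_operator_function {M : Type*} [MetricSpace M] (z : M)
    (h : M → ℝ) (S : Set M) (hS : S = closure {x | h x ≠ 0})
    (hSbdd : Bornology.IsBounded S)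
    (Ch : ℝ) (hCh : ∀ x, |h x| ≤ Ch)                      -- `Ch` bounds `‖h‖_∞`
    (Lh : ℝ) (hLh0 : 0 ≤ Lh) (hLh : ∀ x y, |h x - h y| ≤ Lh * dist x y)  -- `Lh` bounds `‖h‖_Lip`
    (R : ℝ) (hR0 : 0 ≤ R) (hR : ∀ x ∈ S, dist x z ≤ R)    -- `R` bounds `rad(S)`
    (K : Set M) (hzK : z ∈ K) (hSK : S ⊆ K)
    (f : M → ℝ) (Lf : ℝ) (hLf0 : 0 ≤ Lf)
    (hf : ∀ x ∈ K, ∀ y ∈ K, |f x - f y| ≤ Lf * dist x y) (hfz : f z = 0)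
    (Tf : M → ℝ) (hTf : ∀ x, Tf x = if x ∈ K then f x * h x else 0) :
    Tf z = 0 ∧ ∀ x y, |Tf x - Tf y| ≤ (Ch + R * Lh) * Lf * dist x y := by
  have hzero : ∀ x, x ∉ S → h x = 0 := by
    intro x hx
    by_contra hne
    exact hx (hS ▸ subset_closure hne)
  have hTS : ∀ x, x ∉ S → Tf x = 0 := by
    intro x hx
    rw [hTf]
    split
    · rw [hzero x hx, mul_zero]
    · rfl
  have hCh0 : 0 ≤ Ch := le_trans (abs_nonneg _) (hCh z)
  have hfb : ∀ x ∈ S, |f x| ≤ Lf * R := by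
    intro x hx
    calc |f x| = |f x - f z| := by rw [hfz, sub_zero]
      _ ≤ Lf * dist x z := hf x (hSK hx) z hzK
      _ ≤ Lf * R := by
          have := hR x hx
          nlinarith
  have key : ∀ x y, x ∈ S → |Tf x - Tf y| ≤ (Ch + R * Lh) * Lf * dist x y := by
    intro x y hx
    have hxK := hSK hx
    have hTx : Tf x = f x * h x := by rw [hTf]; simp [hxK]
    by_cases hyK : y ∈ K
    · have hTy : Tf y = f y * h y := by rw [hTf]; simp [hyK]
      have heq : Tf x - Tf y = f x * (h x - h y) + h y * (f x - f y) := by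
        rw [hTx, hTy]; ring
      rw [heq]
      calc |f x * (h x - h y) + h y * (f x - f y)|
          ≤ |f x * (h x - h y)| + |h y * (f x - f y)| := abs_add_le _ _
        _ = |f x| * |h x - h y| + |h y| * |f x - f y| := by rw [abs_mul, abs_mul]
        _ ≤ (Lf * R) * (Lh * dist x y) + Ch * (Lf * dist x y) :=
            add_le_add
              (mul_le_mul (hfb x hx) (hLh x y) (abs_nonneg _) (by positivity))
              (mul_le_mul (hCh y) (hf x hxK y hyK) (abs_nonneg _) hCh0)
        _ = (Ch + R * Lh) * Lf * dist x y := by ring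
    · have hyS : y ∉ S := fun hyS => hyK (hSK hyS)
      have hhy : h y = 0 := hzero y hyS
      have hTy : Tf y = 0 := hTS y hyS
      rw [hTy, sub_zero, hTx, abs_mul]
      have h1 : |h x| = |h x - h y| := by rw [hhy, sub_zero]
      calc |f x| * |h x| ≤ (Lf * R) * (Lh * dist x y) := by
            rw [h1]
            exact mul_le_mul (hfb x hx) (hLh x y) (abs_nonneg _) (by positivity)
        _ ≤ (Ch + R * Lh) * Lf * dist x y := by
            nlinarith [mul_nonneg (mul_nonneg hCh0 hLf0) (dist_nonneg (x := x) (y := y))]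
  constructor
  · rw [hTf]; simp [hzK, hfz]
  · intro x y
    by_cases hx : x ∈ S
    · exact key x y hx
    · by_cases hy : y ∈ S
      · rw [abs_sub_comm, dist_comm]
        exact key y x hy
      · rw [hTS x hx, hTS y hy, sub_zero, abs_zero]
        have := dist_nonneg (x := x) (y := y)
        positivity
end

section
/- Let M be a complete metric space, p ≠ q ∈ M, and f_{pq}(x) = (d(p,q)/2)·(d(x,q) − d(x,p))/(d(x,q) + d(x,p)) + C with C chosen so f_{pq}(0) = 0. If u ≠ v ∈ M and ε ≥ 0 satisfy (f_{pq}(u) − f_{pq}(v))/d(u,v) ≥ 1 − ε, then u,v ∈ [p,q]_ε := {x ∈ M : d(p,x) + d(x,q) ≤ d(p,q)/(1−ε)}. In particular, f_{pq} is 1-Lipschitz, (f_{pq}(p) − f_{pq}(q))/d(p,q) = 1, and if (f_{pq}(u)−f_{pq}(v))/d(u,v) = 1 then u,v lie in the metric segment [p,q] = {x : d(p,x)+d(x,q) = d(p,q)}. -/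
/-!
Write `s x = d(x,q) + d(x,p) ≥ d(p,q)`. Up to the constant, `f_{pq}(u) − f_{pq}(v)` equals
`d(p,q) · (d(u,q) d(v,p) − d(u,p) d(v,q)) / (s u · s v)`, and the triangle inequality bounds the
cross term by `min (s u) (s v) · d(u,v)`. Hence the difference quotient is at most
`d(p,q) / s x` for `x = u` and `x = v`: it is at most `1`, and if it is at least `1 − ε` then
`s x ≤ d(p,q) / (1 − ε)`.
-/

theorem dist_mul_dist_sub_dist_mul_dist_le {M : Type*} [PseudoMetricSpace M] (p q u v : M) :
    dist u q * dist v p - dist u p * dist v q ≤ (dist u q + dist u p) * dist u v := by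
  have hq : dist u q - dist v q ≤ dist u v := by linarith [dist_triangle u v q]
  have hp : dist v p - dist u p ≤ dist u v := by linarith [dist_triangle_left v p u]
  calc dist u q * dist v p - dist u p * dist v q
      = dist u q * (dist v p - dist u p) + dist u p * (dist u q - dist v q) := by ring
    _ ≤ dist u q * dist u v + dist u p * dist u v := by gcongr
    _ = (dist u q + dist u p) * dist u v := by ring

theorem dist_le_dist_add_dist {M : Type*} [PseudoMetricSpace M] (p q x : M) :
    dist p q ≤ dist x q + dist x p := by
  linarith [dist_triangle_left p q x]

theorem div_add_sub_div_add {K : Type*} [Field K] {a b c d : K} (hab : a + b ≠ 0)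
    (hcd : c + d ≠ 0) :
    (a - b) / (a + b) - (c - d) / (c + d) = 2 * (a * d - b * c) / ((a + b) * (c + d)) := by
  field_simp
  ring

/-- `f_{pq}` before the normalising constant `C` is added. -/
noncomputable def fpqBase {M : Type*} [PseudoMetricSpace M] (p q x : M) : ℝ :=
  dist p q / 2 * ((dist x q - dist x p) / (dist x q + dist x p))

section fpqBase

variable {M : Type*} [MetricSpace M] {p q : M}

theorem dist_add_dist_pos (hpq : p ≠ q) (x : M) : 0 < dist x q + dist x p :=
  (dist_pos.2 hpq).trans_le (dist_le_dist_add_dist p q x)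

theorem fpqBase_sub (hpq : p ≠ q) (u v : M) :
    fpqBase p q u - fpqBase p q v = dist p q * (dist u q * dist v p - dist u p * dist v q) /
      ((dist u q + dist u p) * (dist v q + dist v p)) := by
  rw [fpqBase, fpqBase, ← mul_sub,
    div_add_sub_div_add (dist_add_dist_pos hpq u).ne' (dist_add_dist_pos hpq v).ne']
  ring

theorem fpqBase_sub_mul_le_left (hpq : p ≠ q) (u v : M) :
    (fpqBase p q u - fpqBase p q v) * (dist u q + dist u p) ≤ dist p q * dist u v := by
  have hu := dist_add_dist_pos hpq u
  have hv := dist_add_dist_pos hpq v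
  have hcross := dist_mul_dist_sub_dist_mul_dist_le q p v u
  rw [dist_comm v u] at hcross
  have hdiff : (fpqBase p q u - fpqBase p q v) * (dist u q + dist u p) =
      dist p q * (dist u q * dist v p - dist u p * dist v q) / (dist v q + dist v p) := by
    rw [fpqBase_sub hpq]
    field_simp
  rw [hdiff, div_le_iff₀ hv, mul_assoc]
  gcongr
  linarith

theorem fpqBase_sub_mul_le_right (hpq : p ≠ q) (u v : M) :
    (fpqBase p q u - fpqBase p q v) * (dist v q + dist v p) ≤ dist p q * dist u v := by
  have hu := dist_add_dist_pos hpq u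
  have hv := dist_add_dist_pos hpq v
  have hcross := dist_mul_dist_sub_dist_mul_dist_le p q u v
  have hdiff : (fpqBase p q u - fpqBase p q v) * (dist v q + dist v p) =
      dist p q * (dist u q * dist v p - dist u p * dist v q) / (dist u q + dist u p) := by
    rw [fpqBase_sub hpq]
    field_simp
  rw [hdiff, div_le_iff₀ hu, mul_assoc]
  gcongr
  linarith

theorem fpqBase_sub_le (hpq : p ≠ q) (u v : M) : fpqBase p q u - fpqBase p q v ≤ dist u v := by
  have hs := dist_add_dist_pos hpq u
  have h := (fpqBase_sub_mul_le_left hpq u v).trans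
    (mul_le_mul_of_nonneg_right (dist_le_dist_add_dist p q u) dist_nonneg)
  rw [mul_comm (dist u q + dist u p)] at h
  exact le_of_mul_le_mul_right h hs

theorem abs_fpqBase_sub_le (hpq : p ≠ q) (u v : M) :
    |fpqBase p q u - fpqBase p q v| ≤ dist u v :=
  abs_sub_le_iff.2 ⟨fpqBase_sub_le hpq u v, dist_comm u v ▸ fpqBase_sub_le hpq v u⟩

theorem mul_dist_add_dist_le_of_mul_dist_le_fpqBase_sub (hpq : p ≠ q) {u v : M} (huv : u ≠ v)
    {c : ℝ} (h : c * dist u v ≤ fpqBase p q u - fpqBase p q v) :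
    c * (dist p u + dist u q) ≤ dist p q ∧ c * (dist p v + dist v q) ≤ dist p q := by
  have hd := dist_pos.2 huv
  have hu := (dist_add_dist_pos hpq u).le
  have hv := (dist_add_dist_pos hpq v).le
  have hleft := (mul_le_mul_of_nonneg_right h hu).trans (fpqBase_sub_mul_le_left hpq u v)
  have hright := (mul_le_mul_of_nonneg_right h hv).trans (fpqBase_sub_mul_le_right hpq u v)
  rw [dist_comm p u, dist_comm p v]
  constructor <;> nlinarith

theorem fpqBase_sub_fpqBase (hpq : p ≠ q) : fpqBase p q p - fpqBase p q q = dist p q := by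
  have hD := (dist_pos.2 hpq).ne'
  simp only [fpqBase, dist_self, dist_comm q p]
  field_simp
  ring

end fpqBase

theorem fpq_properties_general {M : Type*} [MetricSpace M] (z p q : M) (hpq : p ≠ q)
    (g : M → ℝ)
    (hg : ∀ x, g x = (dist p q / 2) * ((dist x q - dist x p) / (dist x q + dist x p)))
    (fpq : M → ℝ) (hfpq : ∀ x, fpq x = g x - g z) :
    (∀ u v : M, u ≠ v → ∀ ε : ℝ, 0 ≤ ε → ε < 1 →
        (fpq u - fpq v) / dist u v ≥ 1 - ε →
        dist p u + dist u q ≤ dist p q / (1 - ε) ∧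
        dist p v + dist v q ≤ dist p q / (1 - ε)) ∧
    (∀ x y : M, |fpq x - fpq y| ≤ dist x y) ∧
    (fpq p - fpq q) / dist p q = 1 ∧
    (∀ u v : M, u ≠ v → (fpq u - fpq v) / dist u v = 1 →
        dist p u + dist u q = dist p q ∧ dist p v + dist v q = dist p q) := by
  obtain rfl : g = fpqBase p q := funext hg
  have hsub (x y : M) : fpq x - fpq y = fpqBase p q x - fpqBase p q y := by
    rw [hfpq, hfpq, sub_sub_sub_cancel_right]
  have hsegment {u v : M} (huv : u ≠ v) {c : ℝ} (hc : c ≤ (fpq u - fpq v) / dist u v) :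
      c * (dist p u + dist u q) ≤ dist p q ∧ c * (dist p v + dist v q) ≤ dist p q := by
    rw [le_div_iff₀ (dist_pos.2 huv), hsub] at hc
    exact mul_dist_add_dist_le_of_mul_dist_le_fpqBase_sub hpq huv hc
  refine ⟨fun u v huv ε _ hε h ↦ ?_, fun x y ↦ hsub x y ▸ abs_fpqBase_sub_le hpq x y,
    by rw [hsub, fpqBase_sub_fpqBase hpq, div_self (dist_pos.2 hpq).ne'],
    fun u v huv h ↦ ?_⟩
  · simp only [le_div_iff₀ (sub_pos.2 hε), mul_comm _ (1 - ε)]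
    exact hsegment huv h
  · obtain ⟨hu, hv⟩ := hsegment huv h.ge
    rw [one_mul] at hu hv
    exact ⟨hu.antisymm (dist_triangle p u q), hv.antisymm (dist_triangle p v q)⟩

/-- Properties of the function
`f_{pq}(x) = (d(p,q)/2)·(d(x,q) − d(x,p))/(d(x,q) + d(x,p)) + C`, normalized so that
`f_{pq}(0) = 0`. If `u ≠ v` and `0 ≤ ε < 1` satisfy `(f_{pq}(u) − f_{pq}(v))/d(u,v) ≥ 1 − ε`,
then `u, v ∈ [p,q]_ε = {x : d(p,x) + d(x,q) ≤ d(p,q)/(1−ε)}`. In particular `f_{pq}` is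
`1`-Lipschitz, `(f_{pq}(p) − f_{pq}(q))/d(p,q) = 1`, and equality
`(f_{pq}(u) − f_{pq}(v))/d(u,v) = 1` forces `u, v ∈ [p,q]`. -/
theorem fpq_properties {M : Type*} [MetricSpace M] [CompleteSpace M] (z p q : M) (hpq : p ≠ q)
    (g : M → ℝ)
    (hg : ∀ x, g x = (dist p q / 2) * ((dist x q - dist x p) / (dist x q + dist x p)))
    (fpq : M → ℝ) (hfpq : ∀ x, fpq x = g x - g z) :
    (∀ u v : M, u ≠ v → ∀ ε : ℝ, 0 ≤ ε → ε < 1 →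
        (fpq u - fpq v) / dist u v ≥ 1 - ε →
        dist p u + dist u q ≤ dist p q / (1 - ε) ∧
        dist p v + dist v q ≤ dist p q / (1 - ε)) ∧
    (∀ x y : M, |fpq x - fpq y| ≤ dist x y) ∧
    (fpq p - fpq q) / dist p q = 1 ∧
    (∀ u v : M, u ≠ v → (fpq u - fpq v) / dist u v = 1 →
        dist p u + dist u q = dist p q ∧ dist p v + dist v q = dist p q) :=
  fpq_properties_general z p q hpq g hg fpq hfpq
end
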